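/- In the side-by-side example, the strategy annotation of the assumption tree that partitions the other car's behaviors into the branch {keep^ω} and the branch {γ | ∃ n, γ n ≠ keep} is dominant: annotating the first branch with the alternating strategy ALT (which outputs acc at even steps and dec at odd steps, ignoring the input history) and the second branch with the constant-keep strategy KEEP^ω dominates every strategy, i.e., for every strategy t and every γ : ℕ → A, level(t, γ) ≤ level(ALT, γ) if γ = keep^ω, and level(t, γ) ≤ level(KEEP^ω, γ) otherwise. -/
import Mathlib


/-- Actions of a car: accelerate, keep speed, decelerate. -/
inductive A : Type
  | acc : A
  | keep : A
  | dec : A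
deriving DecidableEq

/-- Ego's action at step `n` when following strategy `s : List A → A` against
the other car's input sequence `γ : ℕ → A`: `s [γ 0, …, γ (n−1)]`. -/
def ego (s : List A → A) (γ : ℕ → A) (n : ℕ) : A :=
  s (List.ofFn fun i : Fin n => γ i)

/-- Objective φ₁: eventually the cars are not side by side, i.e., at some step
ego's and the other car's actions differ. -/
def phi1 (s : List A → A) (γ : ℕ → A) : Prop :=
  ∃ n, ego s γ n ≠ γ n

/-- Objective φ₂: ego always keeps its speed. -/
def phi2 (s : List A → A) (γ : ℕ → A) : Prop :=
  ∀ n, ego s γ n = A.keep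

open Classical in
/-- Satisfaction level: `2` if φ₁ ∧ φ₂ hold, `1` if φ₁ holds and φ₂ fails,
`0` if φ₁ fails. -/
noncomputable def level (s : List A → A) (γ : ℕ → A) : ℕ :=
  if phi1 s γ ∧ phi2 s γ then 2 else if phi1 s γ then 1 else 0

/-- The input sequence where the other car always keeps its speed. -/
def keepSeq : ℕ → A := fun _ => A.keep

/-- The strategy that outputs `keep` on every history. -/
def KEEP : List A → A := fun _ => A.keep

/-- The alternating strategy: its output at step `n` (i.e., on a history of
length `n`) is `acc` if `n` is even and `dec` if `n` is odd, regardless of the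
input history. -/
def ALT : List A → A := fun h => if h.length % 2 = 0 then A.acc else A.dec

/-- The strategy annotation of the assumption tree branching into {keep^ω} and
{γ | ∃ n, γ n ≠ keep}, annotating the first branch with ALT and the second with
KEEP^ω, is dominant: for every strategy `t` and every `γ`, the annotation of
the branch containing `γ` achieves at least the level of `t` on `γ`. -/
theorem annotated_assumption_tree_dominant :
    ∀ (t : List A → A) (γ : ℕ → A),
      (γ = keepSeq → level t γ ≤ level ALT γ) ∧
      (γ ≠ keepSeq → level t γ ≤ level KEEP γ) := by
  intro t γ
  constructor
  · rintro rfl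
    have hALT : level ALT keepSeq = 1 := by
      have h1 : phi1 ALT keepSeq := ⟨0, by simp [ego, ALT, keepSeq]⟩
      have h2 : ¬ phi2 ALT keepSeq := by
        intro h
        have := h 0
        simp [ego, ALT, keepSeq] at this
      simp [level, h1, h2]
    rw [hALT]
    have : ¬ (phi1 t keepSeq ∧ phi2 t keepSeq) := by
      rintro ⟨⟨n, hn⟩, h2⟩
      exact hn (by rw [h2 n]; rfl)
    simp only [level, if_neg this]
    split <;> omega
  · intro hne
    have : ∃ n, γ n ≠ A.keep := by
      by_contra h
      push_neg at h
      exact hne (funext h)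
    obtain ⟨n, hn⟩ := this
    have h1 : phi1 KEEP γ := ⟨n, by simpa [ego, KEEP] using fun h => hn h.symm⟩
    have h2 : phi2 KEEP γ := fun n => rfl
    have : level KEEP γ = 2 := by simp [level, h1, h2]
    rw [this]
    unfold level
    split <;> [omega; split <;> omega]
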